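/- arXiv:2012.10073 — 2 statements merged into one kernel-verified Lean document; each statement's English description precedes it below -/
import Mathlib

section
/- Let A be an invertible real n×n matrix, B a real m×n matrix, C a real m×m matrix, and suppose the Schur complement S = B A⁻¹ Bᵀ + C is invertible. If the block triangular preconditioner uses the exact blocks, 𝒫 = [[A, Bᵀ], [0, S]], then the preconditioned matrix T = 𝒜 𝒫⁻¹ is an involution: T² equals the identity matrix of size n+m, where 𝒜 = [[A, Bᵀ], [B, −C]]. -/
open Matrix

/-- If the block triangular preconditioner `𝒫 = [[A, Bᵀ], [0, S]]` uses the exact velocity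
block `A` and the exact Schur complement `S = B A⁻¹ Bᵀ + C`, then the preconditioned
matrix `T = 𝒜 𝒫⁻¹` is an involution: `T² = I`. -/
theorem exact_block_preconditioner_involution {n m : ℕ}
    (A : Matrix (Fin n) (Fin n) ℝ) (B : Matrix (Fin m) (Fin n) ℝ)
    (C : Matrix (Fin m) (Fin m) ℝ)
    (hA : IsUnit A)
    (hS : IsUnit (B * A⁻¹ * Bᵀ + C)) :
    (Matrix.fromBlocks A Bᵀ B (-C) *
        (Matrix.fromBlocks A Bᵀ 0 (B * A⁻¹ * Bᵀ + C))⁻¹) *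
      (Matrix.fromBlocks A Bᵀ B (-C) *
        (Matrix.fromBlocks A Bᵀ 0 (B * A⁻¹ * Bᵀ + C))⁻¹) =
      (1 : Matrix (Fin n ⊕ Fin m) (Fin n ⊕ Fin m) ℝ) := by
  set S := B * A⁻¹ * Bᵀ + C with hSdef
  haveI : Invertible A := hA.invertible
  haveI : Invertible S := hS.invertible
  haveI : Invertible (fromBlocks A Bᵀ 0 S) := fromBlocksZero₂₁Invertible A Bᵀ S
  have hPinv : (fromBlocks A Bᵀ 0 S)⁻¹ = fromBlocks A⁻¹ (-(A⁻¹ * Bᵀ * S⁻¹)) 0 S⁻¹ := by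
    rw [← invOf_eq_nonsing_inv, invOf_fromBlocks_zero₂₁_eq, invOf_eq_nonsing_inv,
      invOf_eq_nonsing_inv]
  rw [hPinv]
  have hT : fromBlocks A Bᵀ B (-C) * fromBlocks A⁻¹ (-(A⁻¹ * Bᵀ * S⁻¹)) 0 S⁻¹ =
      fromBlocks 1 0 (B * A⁻¹) (-1) := by
    have hA' := mul_nonsing_inv A (A.isUnit_iff_isUnit_det.mp hA)
    have hS' := mul_nonsing_inv S (S.isUnit_iff_isUnit_det.mp hS)
    rw [fromBlocks_multiply, Matrix.mul_zero, Matrix.mul_zero, add_zero, add_zero, hA',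
      Matrix.mul_neg, ← Matrix.mul_assoc A, ← Matrix.mul_assoc A, hA', Matrix.one_mul,
      neg_add_cancel, Matrix.mul_neg, neg_mul, ← neg_add, ← Matrix.mul_assoc B,
      ← Matrix.mul_assoc B, ← add_mul, ← hSdef, hS']
  rw [hT, fromBlocks_multiply]
  simp [← fromBlocks_one]
end

section
/- (Augmented Lagrangian Schur complement identity.) Let A be an invertible real n×n matrix, B a real m×n matrix, M an invertible real m×m matrix, and γ a real number. Set S₀ = B A⁻¹ Bᵀ and A_γ = A + γ Bᵀ M⁻¹ B. If S₀, A_γ, M + γ S₀, and S_γ = B A_γ⁻¹ Bᵀ are all invertible, then S_γ⁻¹ = S₀⁻¹ + γ M⁻¹. In particular, the inverse of the Schur complement of the augmented matrix equals the inverse of the un-augmented Schur complement plus γ times the inverse of the augmentation weight matrix. -/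
open Matrix

/-- Augmented Lagrangian Schur complement identity: with `S₀ = B A⁻¹ Bᵀ`,
`A_γ = A + γ Bᵀ M⁻¹ B` and `S_γ = B A_γ⁻¹ Bᵀ` all invertible (and `M + γ S₀` invertible),
one has `S_γ⁻¹ = S₀⁻¹ + γ M⁻¹`. -/
theorem augmented_lagrangian_schur_inverse {n m : ℕ}
    (A : Matrix (Fin n) (Fin n) ℝ) (B : Matrix (Fin m) (Fin n) ℝ)
    (M : Matrix (Fin m) (Fin m) ℝ) (γ : ℝ)
    (hA : IsUnit A) (hM : IsUnit M)
    (hS0 : IsUnit (B * A⁻¹ * Bᵀ))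
    (hAγ : IsUnit (A + γ • (Bᵀ * M⁻¹ * B)))
    (hMγ : IsUnit (M + γ • (B * A⁻¹ * Bᵀ)))
    (hSγ : IsUnit (B * (A + γ • (Bᵀ * M⁻¹ * B))⁻¹ * Bᵀ)) :
    (B * (A + γ • (Bᵀ * M⁻¹ * B))⁻¹ * Bᵀ)⁻¹ = (B * A⁻¹ * Bᵀ)⁻¹ + γ • M⁻¹ := by
  set S0 := B * A⁻¹ * Bᵀ with hS0def
  set Aγ := A + γ • (Bᵀ * M⁻¹ * B) with hAγdef
  set Sγ := B * Aγ⁻¹ * Bᵀ with hSγdef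
  have hAdet : A * A⁻¹ = 1 :=
    mul_nonsing_inv A ((isUnit_iff_isUnit_det A).mp hA)
  have hMdet : M⁻¹ * M = 1 :=
    nonsing_inv_mul M ((isUnit_iff_isUnit_det M).mp hM)
  have hAγinv : Aγ⁻¹ * Aγ = 1 :=
    nonsing_inv_mul Aγ ((isUnit_iff_isUnit_det Aγ).mp hAγ)
  have hS0inv : S0 * S0⁻¹ = 1 :=
    mul_nonsing_inv S0 ((isUnit_iff_isUnit_det S0).mp hS0)
  -- key identity: Aγ * (A⁻¹ * Bᵀ) = Bᵀ * M⁻¹ * (M + γ • S0)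
  have key : Aγ * (A⁻¹ * Bᵀ) = Bᵀ * M⁻¹ * (M + γ • S0) := by
    rw [hAγdef, hS0def]
    have h1 : Bᵀ * M⁻¹ * M = Bᵀ := by
      rw [Matrix.mul_assoc, hMdet, Matrix.mul_one]
    rw [Matrix.add_mul, Matrix.mul_add, h1, Matrix.smul_mul, Matrix.mul_smul,
      ← Matrix.mul_assoc A, hAdet, Matrix.one_mul]
    congr 1
    simp only [Matrix.mul_assoc]
  -- hence A⁻¹ * Bᵀ = Aγ⁻¹ * (Bᵀ * M⁻¹ * (M + γ • S0))
  have step : A⁻¹ * Bᵀ = Aγ⁻¹ * (Bᵀ * M⁻¹ * (M + γ • S0)) := by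
    calc A⁻¹ * Bᵀ = (Aγ⁻¹ * Aγ) * (A⁻¹ * Bᵀ) := by rw [hAγinv, Matrix.one_mul]
    _ = Aγ⁻¹ * (Aγ * (A⁻¹ * Bᵀ)) := by rw [Matrix.mul_assoc]
    _ = Aγ⁻¹ * (Bᵀ * M⁻¹ * (M + γ • S0)) := by rw [key]
  -- hence S0 = Sγ * M⁻¹ * (M + γ • S0)
  have hS0eq : S0 = Sγ * (M⁻¹ * (M + γ • S0)) := by
    calc S0 = B * (A⁻¹ * Bᵀ) := by rw [hS0def, Matrix.mul_assoc]
    _ = B * (Aγ⁻¹ * (Bᵀ * M⁻¹ * (M + γ • S0))) := by rw [step]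
    _ = Sγ * (M⁻¹ * (M + γ • S0)) := by
        rw [hSγdef]
        simp only [Matrix.mul_assoc]
  -- right inverse of Sγ
  have hright : Sγ * (M⁻¹ * (M + γ • S0) * S0⁻¹) = 1 := by
    rw [← Matrix.mul_assoc, ← hS0eq, hS0inv]
  have := inv_eq_right_inv hright
  rw [this, Matrix.mul_add, hMdet, Matrix.add_mul, Matrix.one_mul]
  have h2 : M⁻¹ * γ • S0 * S0⁻¹ = γ • M⁻¹ := by
    rw [Matrix.mul_smul, Matrix.smul_mul, Matrix.mul_assoc, hS0inv, Matrix.mul_one]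
  rw [h2]
end
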